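/- (3,5) threshold scheme on the 5-cycle (Proposition 4): let C5 be the cycle graph on vertices {1,…,5}, and for S ∈ {0,1} let ℓ^S := (S,S,S,S,S). Then (a) for every subset V' ⊆ {1,…,5} with |V'| ≤ 2, the reduced states coincide: Tr_{V∖V'}(|G_{ℓ^0}⟩⟨G_{ℓ^0}|) = Tr_{V∖V'}(|G_{ℓ^1}⟩⟨G_{ℓ^1}|); and (b) for every subset V' with |V'| = 3 there exists a nonempty T ⊆ V' such that the product ∏_{i∈T} K_i (with K_i = X_i·∏_{k∈N_i}Z_k) acts trivially outside V' and satisfies (∏_{i∈T} K_i)|G_{ℓ^S}⟩ = (−1)^S |G_{ℓ^S}⟩; hence any three players can determine S while any two players obtain no information about S. -/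

import Mathlib

noncomputable section

open scoped ComplexConjugate

/-- The Hilbert space of qubits indexed by `V`, as functions from bit strings to `ℂ`. -/
abbrev QState (V : Type) : Type := (V → Fin 2) → ℂ

/-- The diagonal operator with diagonal entries `d`. -/
def diagOp {V : Type} (d : (V → Fin 2) → ℂ) : QState V →ₗ[ℂ] QState V where
  toFun f := fun x => d x * f x
  map_add' f g := by funext x; simp [mul_add]
  map_smul' c f := by funext x; simp [smul_eq_mul]; ring

/-- The Pauli `Z` operator on qubit `i`. -/
def Zop {V : Type} (i : V) : QState V →ₗ[ℂ] QState V :=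
  diagOp fun x => (-1 : ℂ) ^ (x i : ℕ)

/-- The Pauli `X` operator on qubit `i` (bit flip). -/
def Xop {V : Type} [DecidableEq V] (i : V) : QState V →ₗ[ℂ] QState V where
  toFun f := fun x => f (Function.update x i (x i + 1))
  map_add' f g := rfl
  map_smul' c f := rfl

/-- The phase gate `S` on qubit `i`, sending `|x⟩` to `(-i)^(x i) |x⟩`. -/
def Sop {V : Type} (i : V) : QState V →ₗ[ℂ] QState V :=
  diagOp fun x => (-Complex.I) ^ (x i : ℕ)

/-- The Pauli `Y` operator on qubit `i`, `Y = i·X·Z`. -/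
def Yop {V : Type} [DecidableEq V] (i : V) : QState V →ₗ[ℂ] QState V :=
  Complex.I • (Xop i ∘ₗ Zop i)

/-- `qVal G x` is the number of edges of `G` both of whose endpoints carry bit 1 in `x`. -/
def qVal {V : Type} (G : SimpleGraph V) (x : V → Fin 2) : ℕ :=
  Nat.card {e : Sym2 V // e ∈ G.edgeSet ∧ ∀ v ∈ e, x v = 1}

/-- The graph state `|G⟩`, with amplitudes `2^{-n/2} (-1)^{q_G(x)}`. -/
def graphState {V : Type} [Fintype V] (G : SimpleGraph V) : QState V :=
  fun x => (((Real.sqrt 2)⁻¹ ^ Fintype.card V : ℝ) : ℂ) * (-1 : ℂ) ^ qVal G x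

/-- The labeled/encoded graph state `|𝒢_ℓ⟩ = (∏_i Z_i^{ℓ_i}) (∏_{j ∈ Vsq} S_j) |G⟩`,
with square-vertex set `Vsq`. -/
def encSq {V : Type} [Fintype V] (G : SimpleGraph V) (Vsq : Set V) (ℓ : V → Fin 2) : QState V :=
  fun x => (-1 : ℂ) ^ Nat.card {i : V // ℓ i = 1 ∧ x i = 1}
    * (-Complex.I) ^ Nat.card {j : V // j ∈ Vsq ∧ x j = 1}
    * graphState G x

/-- The encoded graph state `|G_ℓ⟩` (no square vertices). -/
def encG {V : Type} [Fintype V] (G : SimpleGraph V) (ℓ : V → Fin 2) : QState V :=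
  encSq G ∅ ℓ

open Classical in
/-- The stabilizer operator of vertex `i`: `X_i ∏_{j ∈ N_i} Z_j` for circular vertices,
`Y_i ∏_{j ∈ N_i} Z_j` for square vertices (`i ∈ Vsq`). -/
def Kop {V : Type} [DecidableEq V] (G : SimpleGraph V) (Vsq : Set V) (i : V) :
    QState V →ₗ[ℂ] QState V :=
  (if i ∈ Vsq then Yop i else Xop i) ∘ₗ
    diagOp fun x => (-1 : ℂ) ^ Nat.card {j : V // G.Adj i j ∧ x j = 1}

/-- Merge a bit string on `P` with a bit string on the complement of `P`. -/
def mergeBits {V : Type} [DecidableEq V] (P : Finset V) (a : {i // i ∈ P} → Fin 2)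
    (c : {i // i ∉ P} → Fin 2) : V → Fin 2 :=
  fun i => if h : i ∈ P then a ⟨i, h⟩ else c ⟨i, h⟩

/-- The reduced density matrix of the pure state `ψ` on the qubits in `P`:
`(a, b) ↦ ∑_c ⟨a⊔c|ψ⟩⟨ψ|b⊔c⟩`. -/
def red {V : Type} [Fintype V] [DecidableEq V] (P : Finset V) (ψ : QState V) :
    ({i // i ∈ P} → Fin 2) → ({i // i ∈ P} → Fin 2) → ℂ :=
  fun a b => ∑ c : {i // i ∉ P} → Fin 2, ψ (mergeBits P a c) * conj (ψ (mergeBits P b c))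

/-- The computational basis vector `|y⟩`. -/
def basisVec {V : Type} [Fintype V] [DecidableEq V] (y : V → Fin 2) : QState V :=
  fun x => if x = y then 1 else 0

/-- The matrix entry `⟨x|A|y⟩` of an operator. -/
def opEntry {V : Type} [Fintype V] [DecidableEq V] (A : QState V →ₗ[ℂ] QState V)
    (x y : V → Fin 2) : ℂ := A (basisVec y) x

/-- `A` acts trivially outside `P`: it equals `M ⊗ Id` for some operator `M` on the
qubits in `P`. -/
def trivialOutside {V : Type} [Fintype V] [DecidableEq V] (P : Finset V)
    (A : QState V →ₗ[ℂ] QState V) : Prop :=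
  ∃ M : ({i // i ∈ P} → Fin 2) → ({i // i ∈ P} → Fin 2) → ℂ,
    ∀ a b c c', opEntry A (mergeBits P a c) (mergeBits P b c') = if c = c' then M a b else 0

/-- The product `∏_{i ∈ T} K_i` of (commuting) operators, taken in sorted order. -/
def prodOps {V : Type} [LinearOrder V] (T : Finset V)
    (K : V → QState V →ₗ[ℂ] QState V) : QState V →ₗ[ℂ] QState V :=
  (T.sort (· ≤ ·)).foldr (fun i acc => K i ∘ₗ acc) LinearMap.id


/-- The cycle graph on `Fin n` (consecutive vertices mod `n` are adjacent). -/
def cycG (n : ℕ) [NeZero n] : SimpleGraph (Fin n) where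
  Adj a b := a ≠ b ∧ (b = a + 1 ∨ a = b + 1)
  symm := by constructor; intro a b h; exact ⟨h.1.symm, h.2.symm⟩
  loopless := by constructor; intro a h; exact h.1 rfl

/-!
Flipping bit `i` of `x` changes `q_G(x)` by the number of neighbours of `i` carrying a 1, so
the amplitude of `|G_ℓ⟩` at the flipped string is `(-1)^{ℓ_i} (-1)^{|N_i ∩ x|}` times the old
one. Hence `K_i |G_ℓ⟩ = (-1)^{ℓ_i} |G_ℓ⟩`, and `∏_{i ∈ T} K_i` has eigenvalue `(-1)^{S |T|}` on
`|G_{ℓ^S}⟩`; it acts trivially outside `V'` as soon as `T ⊆ V'` and every vertex outside `V'`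
has an even number of neighbours in `T`, because the `Z`'s it places there cancel in pairs.

In an entry `⟨a|ρ|b⟩` of a reduced state, flipping the bit of a vertex `j ∉ V'` pairs the
summands with opposite signs as soon as `j` has an odd number of neighbours among the positions
where `a` and `b` differ. When such a `j` exists for every `a ≠ b`, only diagonal entries
survive, and these do not depend on `ℓ` since all amplitudes have modulus `2^{-n/2}`.
On `C5` the required vertices `j` and sets `T` are found by a finite search.
-/

open Finset

section Bits

variable {V : Type}

def flipBit [DecidableEq V] (x : V → Fin 2) (i : V) : V → Fin 2 :=
  Function.update x i (x i + 1)

def onesCount (p : V → Prop) (x : V → Fin 2) : ℕ :=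
  Nat.card {k // p k ∧ x k = 1}

theorem onesCount_add_onesCount [Fintype V] (p : V → Prop) (x y : V → Fin 2) :
    onesCount p x + onesCount p y =
      Nat.card {k // p k ∧ x k ≠ y k} + 2 * Nat.card {k // p k ∧ x k = 1 ∧ y k = 1} := by
  classical
  simp only [onesCount, Nat.card_eq_fintype_card, Fintype.card_subtype, card_filter, mul_sum,
    ← sum_add_distrib]
  refine sum_congr rfl fun k _ => ?_
  by_cases hp : p k
  · simp only [hp, true_and]
    generalize x k = u, y k = v
    fin_cases u <;> fin_cases v <;> simp
  · simp [hp]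

theorem neg_one_pow_onesCount_mul [Fintype V] {R : Type*} [Monoid R] [HasDistribNeg R]
    (p : V → Prop) (x y : V → Fin 2) :
    (-1 : R) ^ onesCount p x * (-1) ^ onesCount p y = (-1) ^ Nat.card {k // p k ∧ x k ≠ y k} := by
  rw [← pow_add, onesCount_add_onesCount, pow_add, pow_mul, neg_one_sq, one_pow, mul_one]

variable [DecidableEq V]

theorem flipBit_apply (x : V → Fin 2) (i k : V) :
    flipBit x i k = if k = i then x k + 1 else x k := by
  unfold flipBit
  split_ifs with h
  · subst h
    exact Function.update_self ..
  · exact Function.update_of_ne h ..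

theorem flipBit_flipBit (x : V → Fin 2) (i : V) : flipBit (flipBit x i) i = x := by
  funext k
  simp only [flipBit_apply]
  split_ifs <;> omega

theorem flipBit_apply_ne_iff {x y : V → Fin 2} {i k : V} :
    flipBit x i k ≠ flipBit y i k ↔ x k ≠ y k := by
  simp only [flipBit_apply]
  split_ifs <;> omega

theorem neg_one_pow_onesCount_flipBit [Fintype V] {R : Type*} [Monoid R] [HasDistribNeg R]
    (p : V → Prop) [DecidablePred p] (x : V → Fin 2) (i : V) :
    (-1 : R) ^ onesCount p (flipBit x i) = (if p i then -1 else 1) * (-1) ^ onesCount p x := by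
  have hdiff : Nat.card {k // p k ∧ flipBit x i k ≠ x k} = if p i then 1 else 0 := by
    have hiff : ∀ k, (p k ∧ flipBit x i k ≠ x k) ↔ (p i ∧ k = i) := by
      intro k
      rw [flipBit_apply]
      split_ifs with h <;> simp [h]
    simp only [hiff]
    split_ifs with h <;> simp [h]
  have h := neg_one_pow_onesCount_mul (R := R) p (flipBit x i) x
  rw [hdiff] at h
  calc (-1 : R) ^ onesCount p (flipBit x i)
      = (-1) ^ onesCount p (flipBit x i) * ((-1) ^ onesCount p x * (-1) ^ onesCount p x) := by
        rw [← pow_add, ← two_mul, pow_mul, neg_one_sq, one_pow, mul_one]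
    _ = _ := by
        rw [← mul_assoc, h]
        split_ifs <;> simp

end Bits

section MergeBits

variable {V : Type} [DecidableEq V] {P : Finset V}

theorem mergeBits_apply_of_mem (a : {i // i ∈ P} → Fin 2) (c : {i // i ∉ P} → Fin 2) {k : V}
    (hk : k ∈ P) : mergeBits P a c k = a ⟨k, hk⟩ :=
  dif_pos hk

theorem mergeBits_apply_of_notMem (a : {i // i ∈ P} → Fin 2) (c : {i // i ∉ P} → Fin 2) {k : V}
    (hk : k ∉ P) : mergeBits P a c k = c ⟨k, hk⟩ :=
  dif_neg hk

theorem eq_mergeBits_iff {z : V → Fin 2} {b : {i // i ∈ P} → Fin 2} {c : {i // i ∉ P} → Fin 2} :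
    z = mergeBits P b c ↔
      (∀ k (hk : k ∈ P), z k = b ⟨k, hk⟩) ∧ ∀ k (hk : k ∉ P), z k = c ⟨k, hk⟩ := by
  refine ⟨fun h => ⟨fun k hk => ?_, fun k hk => ?_⟩, fun h => funext fun k => ?_⟩
  · rw [h, mergeBits_apply_of_mem _ _ hk]
  · rw [h, mergeBits_apply_of_notMem _ _ hk]
  · by_cases hk : k ∈ P
    · rw [h.1 k hk, mergeBits_apply_of_mem _ _ hk]
    · rw [h.2 k hk, mergeBits_apply_of_notMem _ _ hk]

theorem mergeBits_flipBit (a : {i // i ∈ P} → Fin 2) (c : {i // i ∉ P} → Fin 2) {j : V}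
    (hj : j ∉ P) : mergeBits P a (flipBit c ⟨j, hj⟩) = flipBit (mergeBits P a c) j := by
  funext k
  by_cases hk : k ∈ P
  · have hkj : k ≠ j := fun h => hj (h ▸ hk)
    rw [mergeBits_apply_of_mem _ _ hk, flipBit_apply, if_neg hkj, mergeBits_apply_of_mem _ _ hk]
  · rw [mergeBits_apply_of_notMem _ _ hk, flipBit_apply, flipBit_apply,
      mergeBits_apply_of_notMem _ _ hk]
    simp only [Subtype.mk.injEq]

theorem mergeBits_ne_mergeBits_iff (a b : {i // i ∈ P} → Fin 2) (c : {i // i ∉ P} → Fin 2)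
    (k : V) : mergeBits P a c k ≠ mergeBits P b c k ↔ ∃ hk : k ∈ P, a ⟨k, hk⟩ ≠ b ⟨k, hk⟩ := by
  by_cases hk : k ∈ P
  · simp [mergeBits_apply_of_mem _ _ hk, hk]
  · simp [mergeBits_apply_of_notMem _ _ hk, hk]

end MergeBits

section GraphState

variable {V : Type} [Fintype V] (G : SimpleGraph V)

theorem encG_apply (ℓ x : V → Fin 2) :
    encG G ℓ x = (-1) ^ onesCount (ℓ · = 1) x * graphState G x := by
  have : IsEmpty {j : V // j ∈ (∅ : Set V) ∧ x j = 1} := ⟨fun j => j.2.1⟩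
  have hsq : Nat.card {j : V // j ∈ (∅ : Set V) ∧ x j = 1} = 0 := Nat.card_of_isEmpty
  rw [encG, encSq, hsq, pow_zero, mul_one]
  rfl

theorem normSq_encG (ℓ x : V → Fin 2) :
    Complex.normSq (encG G ℓ x) = (2 ^ Fintype.card V)⁻¹ := by
  rw [encG_apply, graphState, map_mul, map_mul, map_pow, map_pow, Complex.normSq_neg, map_one,
    Complex.normSq_ofReal, ← mul_pow, ← mul_inv, Real.mul_self_sqrt zero_le_two]
  simp

variable [DecidableEq V]

theorem qVal_update_one (x : V → Fin 2) (i : V) :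
    qVal G (Function.update x i 1) = qVal G (Function.update x i 0) + onesCount (G.Adj i) x := by
  classical
  set edgesOn : Fin 2 → Finset (Sym2 V) :=
    fun v => {e | e ∈ G.edgeSet ∧ ∀ u ∈ e, Function.update x i v u = 1}
  set edgesAt : Finset (Sym2 V) := ({j | G.Adj i j ∧ x j = 1} : Finset V).image fun j => s(i, j)
  have hsplit : edgesOn 1 = edgesOn 0 ∪ edgesAt := by
    ext e
    induction e using Sym2.ind with
    | _ a b =>
      simp only [edgesOn, edgesAt, mem_union, mem_filter, mem_univ, true_and, mem_image,
        SimpleGraph.mem_edgeSet, Sym2.mem_iff, forall_eq_or_imp, forall_eq,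
        Function.update_apply, Sym2.eq_iff]
      have := G.adj_comm a b
      have := G.loopless.irrefl i
      grind
  have hdisj : Disjoint (edgesOn 0) edgesAt := by
    rw [disjoint_left]
    intro e he hi
    obtain ⟨j, -, rfl⟩ := mem_image.mp hi
    simp [edgesOn] at he
  simp only [qVal, onesCount, Nat.card_eq_fintype_card, Fintype.card_subtype]
  change #(edgesOn 1) = #(edgesOn 0) + _
  rw [hsplit, card_union_of_disjoint hdisj,
    card_image_of_injective _ fun _ _ => Sym2.congr_right.mp]

theorem qVal_flipBit_add_qVal (x : V → Fin 2) (i : V) :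
    qVal G (flipBit x i) + qVal G x =
      2 * qVal G (Function.update x i 0) + onesCount (G.Adj i) x := by
  have hq := qVal_update_one G x i
  have hflip : ∀ v, x i + 1 = v → flipBit x i = Function.update x i v := fun v hv => by
    rw [← hv]
    rfl
  rcases Fin.exists_fin_two.mp ⟨x i, rfl⟩ with hx | hx
  · have hx0 : Function.update x i 0 = x := by rw [← hx, Function.update_eq_self]
    rw [hflip 1 (by rw [hx]; rfl)]
    rw [hx0] at hq ⊢
    omega
  · have hx1 : Function.update x i 1 = x := by rw [← hx, Function.update_eq_self]
    rw [hflip 0 (by rw [hx]; rfl)]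
    rw [hx1] at hq
    omega

theorem neg_one_pow_qVal_flipBit (x : V → Fin 2) (i : V) :
    (-1 : ℂ) ^ qVal G (flipBit x i) = (-1) ^ onesCount (G.Adj i) x * (-1) ^ qVal G x := by
  calc (-1 : ℂ) ^ qVal G (flipBit x i)
      = (-1) ^ (qVal G (flipBit x i) + qVal G x) * (-1) ^ qVal G x := by
        rw [pow_add, mul_assoc, ← pow_add, ← two_mul, pow_mul, neg_one_sq, one_pow, mul_one]
    _ = _ := by rw [qVal_flipBit_add_qVal, pow_add, pow_mul, neg_one_sq, one_pow, one_mul]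

theorem graphState_flipBit (x : V → Fin 2) (i : V) :
    graphState G (flipBit x i) = (-1) ^ onesCount (G.Adj i) x * graphState G x := by
  simp only [graphState, neg_one_pow_qVal_flipBit]
  ring

theorem encG_flipBit (ℓ x : V → Fin 2) (i : V) :
    encG G ℓ (flipBit x i) = (-1) ^ (ℓ i : ℕ) * (-1) ^ onesCount (G.Adj i) x * encG G ℓ x := by
  have hℓ : (if ℓ i = 1 then -1 else 1 : ℂ) = (-1) ^ (ℓ i : ℕ) := by
    rcases Fin.exists_fin_two.mp ⟨ℓ i, rfl⟩ with h | h <;> simp [h]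
  rw [encG_apply, encG_apply, graphState_flipBit, neg_one_pow_onesCount_flipBit, hℓ]
  ring

theorem Kop_apply (i : V) (f : QState V) (x : V → Fin 2) :
    Kop G ∅ i f x = (-1) ^ onesCount (G.Adj i) x * f (flipBit x i) := by
  classical
  have hsign := neg_one_pow_onesCount_flipBit (R := ℂ) (G.Adj i) x i
  rw [if_neg (G.loopless.irrefl i), one_mul] at hsign
  rw [Kop, if_neg (Set.notMem_empty i)]
  exact congrArg (· * f (flipBit x i)) hsign

theorem Kop_encG (ℓ : V → Fin 2) (i : V) :
    Kop G ∅ i (encG G ℓ) = (-1 : ℂ) ^ (ℓ i : ℕ) • encG G ℓ := by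
  funext x
  have hsq : ((-1 : ℂ) ^ onesCount (G.Adj i) x) ^ 2 = 1 := by
    rw [← pow_mul, pow_mul', neg_one_sq, one_pow]
  rw [Kop_apply, encG_flipBit]
  change _ = (-1 : ℂ) ^ (ℓ i : ℕ) * encG G ℓ x
  linear_combination ((-1) ^ (ℓ i : ℕ) * encG G ℓ x) * hsq

end GraphState

theorem prodOps_apply_of_forall_eq_smul {V : Type} [LinearOrder V] (T : Finset V)
    (K : V → QState V →ₗ[ℂ] QState V) (ψ : QState V) (μ : V → ℂ)
    (hψ : ∀ i ∈ T, K i ψ = μ i • ψ) : prodOps T K ψ = (∏ i ∈ T, μ i) • ψ := by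
  have hlist : ∀ l : List V, (∀ i ∈ l, K i ψ = μ i • ψ) →
      l.foldr (fun i acc => K i ∘ₗ acc) LinearMap.id ψ = (l.map μ).prod • ψ := by
    intro l hl
    induction l with
    | nil => simp
    | cons i t ih =>
      rw [List.foldr_cons, LinearMap.comp_apply, ih fun j hj => hl j (by simp [hj]),
        LinearMap.map_smul, hl i (by simp), smul_smul, List.map_cons, List.prod_cons, mul_comm]
  rw [prodOps, hlist _ fun i hi => hψ i ((mem_sort _).mp hi),
    ← List.prod_toFinset _ (sort_nodup T _), sort_toFinset]

section Stabilizers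

variable {V : Type} [DecidableEq V]

theorem foldl_flipBit_apply_of_notMem (l : List V) (x : V → Fin 2) {k : V} (hk : k ∉ l) :
    l.foldl flipBit x k = x k := by
  induction l generalizing x with
  | nil => rfl
  | cons i t ih =>
    rw [List.foldl_cons, ih _ fun h => hk (List.mem_cons_of_mem i h), flipBit_apply,
      if_neg fun (h : k = i) => hk (h ▸ List.mem_cons_self)]

theorem foldl_flipBit_apply_congr (l : List V) {x y : V → Fin 2} {k : V} (h : x k = y k) :
    l.foldl flipBit x k = l.foldl flipBit y k := by
  induction l generalizing x y with
  | nil => exact h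
  | cons i t ih => exact ih (by simp only [flipBit_apply, h])

theorem trivialOutside_of_apply [Fintype V] (P : Finset V) (A : QState V →ₗ[ℂ] QState V)
    (s : (V → Fin 2) → ℂ) (φ : (V → Fin 2) → V → Fin 2) (hA : ∀ f x, A f x = s x * f (φ x))
    (hs : ∀ x y, Set.EqOn x y P → s x = s y) (hφ_out : ∀ x, ∀ k ∉ P, φ x k = x k)
    (hφ_in : ∀ x y, Set.EqOn x y P → Set.EqOn (φ x) (φ y) P) :
    trivialOutside P A := by
  set c₀ : {i // i ∉ P} → Fin 2 := fun _ => 0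
  refine ⟨fun a b => s (mergeBits P a c₀) *
    if φ (mergeBits P a c₀) = mergeBits P b c₀ then 1 else 0, fun a b c c' => ?_⟩
  have hagree : ∀ c c' : {i // i ∉ P} → Fin 2, Set.EqOn (mergeBits P a c) (mergeBits P a c') P :=
    fun c c' k hk => by rw [mergeBits_apply_of_mem _ _ hk, mergeBits_apply_of_mem _ _ hk]
  have hφ : ∀ c c', φ (mergeBits P a c) = mergeBits P b c' ↔
      (∀ k (hk : k ∈ P), φ (mergeBits P a c₀) k = b ⟨k, hk⟩) ∧ c = c' := by
    intro c c'
    rw [eq_mergeBits_iff, funext_iff]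
    refine and_congr (forall₂_congr fun k hk => by rw [hφ_in _ _ (hagree c c₀) hk]) ?_
    refine ⟨fun h k => ?_, fun h k hk => ?_⟩
    · rw [← h k k.2, hφ_out _ _ k.2, mergeBits_apply_of_notMem]
    · rw [hφ_out _ _ hk, ← h ⟨k, hk⟩, mergeBits_apply_of_notMem]
  rw [opEntry, hA]
  simp only [basisVec, hs _ _ (hagree c c₀), hφ, and_true]
  split_ifs <;> simp_all

variable [Fintype V] (G : SimpleGraph V)

def stabilizerPhase : List V → (V → Fin 2) → ℂ
  | [], _ => 1
  | i :: t, x => (-1) ^ onesCount (G.Adj i) x * stabilizerPhase t (flipBit x i)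

theorem foldr_Kop_apply (l : List V) (f : QState V) (x : V → Fin 2) :
    l.foldr (fun i acc => Kop G ∅ i ∘ₗ acc) LinearMap.id f x =
      stabilizerPhase G l x * f (l.foldl flipBit x) := by
  induction l generalizing x with
  | nil => simp [stabilizerPhase]
  | cons i t ih =>
    rw [List.foldr_cons, LinearMap.comp_apply, Kop_apply, ih, stabilizerPhase, List.foldl_cons,
      mul_assoc]

theorem stabilizerPhase_eq_mul (l : List V) (x y : V → Fin 2) :
    stabilizerPhase G l x = stabilizerPhase G l y *
      (-1) ^ (l.map fun i => Nat.card {k // G.Adj i k ∧ x k ≠ y k}).sum := by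
  induction l generalizing x y with
  | nil => simp [stabilizerPhase]
  | cons i t ih =>
    have hflip : ∀ j, Nat.card {k // G.Adj j k ∧ flipBit x i k ≠ flipBit y i k} =
        Nat.card {k // G.Adj j k ∧ x k ≠ y k} := fun j => by simp only [flipBit_apply_ne_iff]
    have hsign : (-1 : ℂ) ^ onesCount (G.Adj i) x =
        (-1) ^ onesCount (G.Adj i) y * (-1) ^ Nat.card {k // G.Adj i k ∧ x k ≠ y k} := by
      rw [← neg_one_pow_onesCount_mul, mul_left_comm, ← pow_add, ← two_mul, pow_mul, neg_one_sq,
        one_pow, mul_one]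
    simp only [stabilizerPhase, ih (flipBit x i) (flipBit y i), hflip, hsign, List.map_cons,
      List.sum_cons, pow_add]
    ring

end Stabilizers

theorem stabilizerPhase_sort_eq_of_eqOn {V : Type} [LinearOrder V] [Fintype V]
    (G : SimpleGraph V) [DecidableRel G.Adj] {P T : Finset V}
    (heven : ∀ j ∉ P, Even #{i ∈ T | G.Adj i j}) {x y : V → Fin 2} (hxy : Set.EqOn x y P) :
    stabilizerPhase G (T.sort (· ≤ ·)) x = stabilizerPhase G (T.sort (· ≤ ·)) y := by
  set D : Finset V := {k | x k ≠ y k}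
  have hcard : ∀ i, Nat.card {k // G.Adj i k ∧ x k ≠ y k} = #(D.bipartiteAbove G.Adj i) := by
    intro i
    rw [Nat.card_eq_fintype_card, Fintype.card_subtype, bipartiteAbove, filter_filter]
    simp only [and_comm]
  rw [stabilizerPhase_eq_mul G _ x y, ← List.sum_toFinset _ (sort_nodup T _), sort_toFinset]
  simp only [hcard]
  rw [sum_card_bipartiteAbove_eq_sum_card_bipartiteBelow, Even.neg_one_pow, mul_one]
  exact even_sum _ fun k hk => heven k fun hkP => (mem_filter.mp hk).2 (hxy hkP)

theorem trivialOutside_prodOps_Kop {V : Type} [LinearOrder V] [Fintype V] (G : SimpleGraph V)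
    [DecidableRel G.Adj] {P T : Finset V} (hTP : T ⊆ P)
    (heven : ∀ j ∉ P, Even #{i ∈ T | G.Adj i j}) :
    trivialOutside P (prodOps T (Kop G ∅)) :=
  trivialOutside_of_apply P _ (stabilizerPhase G (T.sort (· ≤ ·)))
    (fun x => (T.sort (· ≤ ·)).foldl flipBit x) (foldr_Kop_apply G _)
    (fun _ _ => stabilizerPhase_sort_eq_of_eqOn G heven)
    (fun x _ hk => foldl_flipBit_apply_of_notMem _ x fun h => hk (hTP ((mem_sort _).mp h)))
    (fun _ _ hxy _ hk => foldl_flipBit_apply_congr _ (hxy hk))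

section ReducedState

variable {V : Type} [Fintype V] [DecidableEq V] (G : SimpleGraph V)

theorem red_encG_apply_eq_zero (ℓ : V → Fin 2) {P : Finset V} {a b : {i // i ∈ P} → Fin 2}
    {j : V} (hj : j ∉ P)
    (hodd : ∀ c, Odd (Nat.card {k // G.Adj j k ∧ mergeBits P a c k ≠ mergeBits P b c k})) :
    red P (encG G ℓ) a b = 0 := by
  set term : ({i // i ∉ P} → Fin 2) → ℂ :=
    fun c => encG G ℓ (mergeBits P a c) * conj (encG G ℓ (mergeBits P b c))
  have hconj : ∀ m : ℕ, conj ((-1 : ℂ) ^ m) = (-1) ^ m := fun m => by simp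
  have hterm : ∀ c, term (flipBit c ⟨j, hj⟩) = -term c := by
    intro c
    have hsign := neg_one_pow_onesCount_mul (R := ℂ) (G.Adj j) (mergeBits P a c) (mergeBits P b c)
    rw [(hodd c).neg_one_pow] at hsign
    have hℓ : ((-1 : ℂ) ^ (ℓ j : ℕ)) ^ 2 = 1 := by rw [← pow_mul, pow_mul', neg_one_sq, one_pow]
    simp only [term, mergeBits_flipBit, encG_flipBit, map_mul, hconj]
    linear_combination
      ((-1) ^ onesCount (G.Adj j) (mergeBits P a c) * (-1) ^ onesCount (G.Adj j) (mergeBits P b c)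
        * encG G ℓ (mergeBits P a c) * conj (encG G ℓ (mergeBits P b c))) * hℓ
      + encG G ℓ (mergeBits P a c) * conj (encG G ℓ (mergeBits P b c)) * hsign
  have hneg : red P (encG G ℓ) a b = -red P (encG G ℓ) a b := by
    calc red P (encG G ℓ) a b = ∑ c, term (flipBit c ⟨j, hj⟩) :=
          (Equiv.sum_comp (Function.Involutive.toPerm _ (flipBit_flipBit · ⟨j, hj⟩)) term).symm
      _ = -red P (encG G ℓ) a b := by
          simp only [hterm, sum_neg_distrib]
          rfl
  exact self_eq_neg.mp hneg

theorem red_encG_eq_red_encG [DecidableRel G.Adj] {P : Finset V}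
    (hP : ∀ D ⊆ P, D.Nonempty → ∃ j ∉ P, Odd #{k ∈ D | G.Adj j k}) (ℓ ℓ' : V → Fin 2) :
    red P (encG G ℓ) = red P (encG G ℓ') := by
  funext a b
  by_cases hab : a = b
  · subst hab
    simp only [red, Complex.mul_conj, normSq_encG]
  · set D : Finset V := {k | ∃ hk : k ∈ P, a ⟨k, hk⟩ ≠ b ⟨k, hk⟩}
    have hDP : D ⊆ P := fun k hk => (mem_filter.mp hk).2.1
    have hD : D.Nonempty := by
      obtain ⟨⟨k, hk⟩, hne⟩ := Function.ne_iff.mp hab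
      exact ⟨k, mem_filter.mpr ⟨mem_univ k, hk, hne⟩⟩
    obtain ⟨j, hj, hodd⟩ := hP D hDP hD
    have hcard : ∀ c, Nat.card {k // G.Adj j k ∧ mergeBits P a c k ≠ mergeBits P b c k} =
        #{k ∈ D | G.Adj j k} := fun c => by
      rw [Nat.card_eq_fintype_card, Fintype.card_subtype, filter_filter]
      simp only [mergeBits_ne_mergeBits_iff, and_comm]
    rw [red_encG_apply_eq_zero G ℓ hj fun c => hcard c ▸ hodd,
      red_encG_apply_eq_zero G ℓ' hj fun c => hcard c ▸ hodd]

end ReducedState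

instance (n : ℕ) [NeZero n] : DecidableRel (cycG n).Adj := fun a b =>
  inferInstanceAs (Decidable (a ≠ b ∧ (b = a + 1 ∨ a = b + 1)))

theorem cycG_five_exists_odd_adj :
    ∀ P : Finset (Fin 5), #P ≤ 2 →
      ∀ D ⊆ P, D.Nonempty → ∃ j ∉ P, Odd #{k ∈ D | (cycG 5).Adj j k} := by
  decide

theorem cycG_five_exists_odd_stabilizer :
    ∀ P : Finset (Fin 5), #P = 3 →
      ∃ T ⊆ P, Odd #T ∧ ∀ j ∉ P, Even #{i ∈ T | (cycG 5).Adj i j} := by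
  decide

/-- (3,5) threshold scheme on the 5-cycle: with `ℓ^S = (S,…,S)`,
(a) any set of at most two players has reduced states independent of `S`;
(b) for any set of three players there is a nonempty `T` inside it such that
`∏_{i∈T} K_i` acts trivially outside the set and has `|G_{ℓ^S}⟩` as eigenvector with
eigenvalue `(−1)^S`; hence three players can determine `S` while two obtain nothing. -/
theorem c5_35_threshold :
    (∀ P : Finset (Fin 5), P.card ≤ 2 →
      red P (encG (cycG 5) fun _ => (0 : Fin 2)) =
        red P (encG (cycG 5) fun _ => (1 : Fin 2))) ∧
    (∀ P : Finset (Fin 5), P.card = 3 →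
      ∃ T : Finset (Fin 5), T.Nonempty ∧ T ⊆ P ∧
        trivialOutside P (prodOps T (Kop (cycG 5) ∅)) ∧
        ∀ S : Fin 2,
          prodOps T (Kop (cycG 5) ∅) (encG (cycG 5) fun _ => S) =
            ((-1 : ℂ) ^ (S : ℕ)) • encG (cycG 5) fun _ => S) := by
  refine ⟨fun P hP => red_encG_eq_red_encG _ (cycG_five_exists_odd_adj P hP) _ _, fun P hP => ?_⟩
  obtain ⟨T, hTP, hodd, heven⟩ := cycG_five_exists_odd_stabilizer P hP
  refine ⟨T, card_pos.mp hodd.pos, hTP, trivialOutside_prodOps_Kop _ hTP heven, fun S => ?_⟩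
  rw [prodOps_apply_of_forall_eq_smul T _ _ _ fun i _ => Kop_encG _ _ i, prod_const,
    ← pow_mul, mul_comm, pow_mul, hodd.neg_one_pow]

end
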